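/- arXiv:2102.11782 — 2 statements merged into one kernel-verified Lean document; each statement's English description precedes it below -/
import Mathlib

section
/- Let Δ be a set of terms over V and let l_1, …, l_k be literals (the literals of a claim that is a conjunction of k literals). If there exists a consistent subset Φ ⊆ Δ with Φ ⊨ l_i for every i = 1, …, k, then there exists a consistent subset Φ' ⊆ Φ with |Φ'| ≤ k and Φ' ⊨ l_i for every i = 1, …, k. In particular, such a claim has a consistent entailing subset in Δ if and only if it has one of cardinality at most k. -/
/-- A literal over `V`: `Sum.inl x` is the positive literal `x`,
`Sum.inr x` is the negative literal `¬x`. -/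
abbrev Lit (V : Type) := V ⊕ V

/-- A term is a finite set of literals. -/
abbrev Term (V : Type) := Finset (Lit V)

/-- An assignment satisfies a literal. -/
def satLit {V : Type} (σ : V → Bool) : Lit V → Prop
  | Sum.inl x => σ x = true
  | Sum.inr x => σ x = false

/-- An assignment satisfies a term if it satisfies every literal in it. -/
def satTerm {V : Type} (σ : V → Bool) (t : Term V) : Prop := ∀ l ∈ t, satLit σ l

/-- A set of terms is consistent if some assignment satisfies all of its members. -/
def ConsistentT {V : Type} (Φ : Set (Term V)) : Prop := ∃ σ, ∀ t ∈ Φ, satTerm σ t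

/-- `Φ ⊨ l`: every assignment satisfying all terms of `Φ` satisfies `l`. -/
def EntailsLit {V : Type} (Φ : Set (Term V)) (l : Lit V) : Prop :=
  ∀ σ, (∀ t ∈ Φ, satTerm σ t) → satLit σ l

/-!
A consistent set of terms entails a literal only if some term contains it: otherwise, in a
satisfying assignment, reset the literal's variable so that the literal fails; this can only
falsify literals equal to it, so every term stays satisfied. Picking one such term per literal
gives a subset of size at most `k`, which is consistent as a subset of a consistent set.
-/

variable {V : Type}

section Falsify

variable [DecidableEq V]

/-- `l.isRight` is the value of the variable of `l` at which `l` fails. -/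
def falsify (σ : V → Bool) (l : Lit V) : V → Bool :=
  Function.update σ (Sum.elim id id l) l.isRight

lemma not_satLit_falsify (σ : V → Bool) (l : Lit V) : ¬ satLit (falsify σ l) l := by
  cases l <;> simp [falsify, satLit]

lemma satLit_falsify_of_ne {σ : V → Bool} {l m : Lit V} (hm : satLit σ m) (hne : m ≠ l) :
    satLit (falsify σ l) m := by
  cases m <;> cases l <;> simp_all [falsify, satLit, Function.update_apply]

lemma satTerm_falsify_of_notMem {σ : V → Bool} {t : Term V} {l : Lit V} (ht : satTerm σ t)
    (hl : l ∉ t) : satTerm (falsify σ l) t := fun m hm =>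
  satLit_falsify_of_ne (ht m hm) (ne_of_mem_of_not_mem hm hl)

end Falsify

lemma ConsistentT.mono {Φ Ψ : Set (Term V)} (hΨΦ : Ψ ⊆ Φ) (hΦ : ConsistentT Φ) :
    ConsistentT Ψ :=
  let ⟨σ, hσ⟩ := hΦ
  ⟨σ, fun t ht => hσ t (hΨΦ ht)⟩

lemma entailsLit_of_mem {Φ : Set (Term V)} {t : Term V} {l : Lit V} (ht : t ∈ Φ) (hl : l ∈ t) :
    EntailsLit Φ l :=
  fun _ hσ => hσ t ht l hl

lemma EntailsLit.exists_mem {Φ : Set (Term V)} {l : Lit V} (hent : EntailsLit Φ l)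
    (hcons : ConsistentT Φ) : ∃ t ∈ Φ, l ∈ t := by
  classical
  by_contra! hnot
  obtain ⟨σ, hσ⟩ := hcons
  exact not_satLit_falsify σ l
    (hent _ fun t ht => satTerm_falsify_of_notMem (hσ t ht) (hnot t ht))

lemma ConsistentT.exists_finset_card_le_entailsLit {ι : Type*} [Fintype ι] {Φ : Set (Term V)}
    (hcons : ConsistentT Φ) {l : ι → Lit V} (hent : ∀ i, EntailsLit Φ (l i)) :
    ∃ Φ' : Finset (Term V), (↑Φ' : Set (Term V)) ⊆ Φ ∧ Φ'.card ≤ Fintype.card ι ∧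
      ConsistentT (↑Φ' : Set (Term V)) ∧ ∀ i, EntailsLit (↑Φ' : Set (Term V)) (l i) := by
  classical
  choose t htΦ hlt using fun i => (hent i).exists_mem hcons
  have hsub : (↑(Finset.univ.image t) : Set (Term V)) ⊆ Φ := by
    simpa [Set.range_subset_iff] using htΦ
  exact ⟨Finset.univ.image t, hsub, Finset.card_image_le, hcons.mono hsub,
    fun i => entailsLit_of_mem (by simp) (hlt i)⟩

theorem stmt_5_general {V : Type} (Δ : Set (Term V)) (k : ℕ) (l : Fin k → Lit V)
    (Φ : Set (Term V)) (hcons : ConsistentT Φ)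
    (hent : ∀ i, EntailsLit Φ (l i)) :
    (∃ Φ' : Finset (Term V), (↑Φ' : Set (Term V)) ⊆ Φ ∧ Φ'.card ≤ k ∧
      ConsistentT (↑Φ' : Set (Term V)) ∧
      ∀ i, EntailsLit (↑Φ' : Set (Term V)) (l i)) ∧
    ((∃ Ψ : Set (Term V), Ψ ⊆ Δ ∧ ConsistentT Ψ ∧ ∀ i, EntailsLit Ψ (l i)) ↔
      (∃ Ψ : Finset (Term V), (↑Ψ : Set (Term V)) ⊆ Δ ∧ Ψ.card ≤ k ∧
        ConsistentT (↑Ψ : Set (Term V)) ∧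
        ∀ i, EntailsLit (↑Ψ : Set (Term V)) (l i))) := by
  have small : ∀ Ψ : Set (Term V), ConsistentT Ψ → (∀ i, EntailsLit Ψ (l i)) →
      ∃ Ψ' : Finset (Term V), (↑Ψ' : Set (Term V)) ⊆ Ψ ∧ Ψ'.card ≤ k ∧
        ConsistentT (↑Ψ' : Set (Term V)) ∧ ∀ i, EntailsLit (↑Ψ' : Set (Term V)) (l i) :=
    fun Ψ hΨ hΨent => by simpa using hΨ.exists_finset_card_le_entailsLit hΨent
  refine ⟨small Φ hcons hent, ⟨?_, ?_⟩⟩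
  · rintro ⟨Ψ, hΨΔ, hΨ, hΨent⟩
    obtain ⟨Ψ', hΨ'Ψ, hcard, hΨ', hΨ'ent⟩ := small Ψ hΨ hΨent
    exact ⟨Ψ', hΨ'Ψ.trans hΨΔ, hcard, hΨ', hΨ'ent⟩
  · rintro ⟨Ψ, hΨΔ, -, hΨ, hΨent⟩
    exact ⟨Ψ, hΨΔ, hΨ, hΨent⟩

/-- If a consistent subset of `Δ` entails each of the literals `l 1, …, l k`,
then there is such a subset of cardinality at most `k`; in particular, the claim
has a consistent entailing subset in `Δ` iff it has one of cardinality at most `k`. -/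
theorem stmt_5 {V : Type} (Δ : Set (Term V)) (k : ℕ) (l : Fin k → Lit V)
    (Φ : Set (Term V)) (hΦΔ : Φ ⊆ Δ) (hcons : ConsistentT Φ)
    (hent : ∀ i, EntailsLit Φ (l i)) :
    (∃ Φ' : Finset (Term V), (↑Φ' : Set (Term V)) ⊆ Φ ∧ Φ'.card ≤ k ∧
      ConsistentT (↑Φ' : Set (Term V)) ∧
      ∀ i, EntailsLit (↑Φ' : Set (Term V)) (l i)) ∧
    ((∃ Ψ : Set (Term V), Ψ ⊆ Δ ∧ ConsistentT Ψ ∧ ∀ i, EntailsLit Ψ (l i)) ↔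
      (∃ Ψ : Finset (Term V), (↑Ψ : Set (Term V)) ⊆ Δ ∧ Ψ.card ≤ k ∧
        ConsistentT (↑Ψ : Set (Term V)) ∧
        ∀ i, EntailsLit (↑Ψ : Set (Term V)) (l i))) :=
  stmt_5_general Δ k l Φ hcons hent
end

section
/- Let r ≥ 1, let Δ be a set of r-formulas over V, and let a_1, …, a_k be atoms (each a literal or a positive clause of width at most r). Then there exists a consistent subset Φ ⊆ Δ with Φ ⊨ a_i for every i = 1, …, k if and only if there exists such a subset of cardinality at most r·k. -/
/-- An `r`-formula: a finite set of literals together with a finite set of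
positive clauses (each clause a finite set of variables). -/
abbrev RForm (V : Type) := Finset (Lit V) × Finset (Finset V)

/-- An atom: a literal or a positive clause. -/
abbrev Atom (V : Type) := Lit V ⊕ Finset V

/-- An assignment satisfies a positive clause if it makes some variable of it true. -/
def satClause {V : Type} (σ : V → Bool) (C : Finset V) : Prop := ∃ x ∈ C, σ x = true

/-- An assignment satisfies an `r`-formula if it satisfies all of its literals
and all of its positive clauses. -/
def satForm {V : Type} (σ : V → Bool) (φ : RForm V) : Prop :=
  (∀ l ∈ φ.1, satLit σ l) ∧ (∀ C ∈ φ.2, satClause σ C)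

/-- All positive clauses of the formula are nonempty and of width at most `r`. -/
def IsRForm {V : Type} (r : ℕ) (φ : RForm V) : Prop :=
  ∀ C ∈ φ.2, C.Nonempty ∧ C.card ≤ r

/-- An assignment satisfies an atom. -/
def satAtom {V : Type} (σ : V → Bool) : Atom V → Prop
  | Sum.inl l => satLit σ l
  | Sum.inr C => satClause σ C

/-- The atom is a literal, or a nonempty positive clause of width at most `r`. -/
def IsRAtom {V : Type} (r : ℕ) : Atom V → Prop
  | Sum.inl _ => True
  | Sum.inr C => C.Nonempty ∧ C.card ≤ r

/-- A set of `r`-formulas is consistent if some assignment satisfies all members. -/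
def ConsistentF {V : Type} (Φ : Set (RForm V)) : Prop := ∃ σ, ∀ φ ∈ Φ, satForm σ φ

/-- `Φ ⊨ a`: every assignment satisfying all members of `Φ` satisfies the atom `a`. -/
def EntailsA {V : Type} (Φ : Set (RForm V)) (a : Atom V) : Prop :=
  ∀ σ, (∀ φ ∈ Φ, satForm σ φ) → satAtom σ a

/-!
A consistent set `Φ` of such formulas has a greatest model `τ`: a variable is true unless its
negation occurs in `Φ`. If `Φ ⊨ ¬x` then `τ x = false`, so `¬x` occurs in a single formula of `Φ`.
If `Φ ⊨ D` for a positive clause `D` (a positive literal `x` being the clause `{x}`), then `τ`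
switched to false on `D` violates some `φ ∈ Φ`. Either `φ` contains a positive literal from `D`,
or some clause `C` of `φ` meets `D` and every `v ∈ C \ D` is false in `τ`, i.e. `¬v` occurs in some
`ψ_v ∈ Φ`; then `φ` and the `ψ_v`, at most `|C| ≤ r` formulas, entail `D`. The union of these
witnesses over the `k` atoms has at most `r k` members.
-/

variable {V : Type}

lemma ConsistentF.mono {Φ Ψ : Set (RForm V)} (hΦ : ConsistentF Φ) (hΨ : Ψ ⊆ Φ) :
    ConsistentF Ψ :=
  hΦ.imp fun _ hσ φ hφ => hσ φ (hΨ hφ)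

lemma EntailsA.mono {Φ Ψ : Set (RForm V)} {a : Atom V} (h : EntailsA Ψ a) (hΨ : Ψ ⊆ Φ) :
    EntailsA Φ a :=
  fun σ hσ => h σ fun φ hφ => hσ φ (hΨ hφ)

lemma entailsA_singleton_of_mem {φ : RForm V} {l : Lit V} (hl : l ∈ φ.1) :
    EntailsA ({φ} : Set (RForm V)) (Sum.inl l) :=
  fun _ hσ => (hσ φ rfl).1 l hl

lemma exists_finset_entailsA_all {Φ : Set (RForm V)} {ι : Type*} (s : Finset ι)
    (a : ι → Atom V) {m : ℕ}
    (h : ∀ i ∈ s, ∃ Ψ : Finset (RForm V), ↑Ψ ⊆ Φ ∧ Ψ.card ≤ m ∧ EntailsA ↑Ψ (a i)) :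
    ∃ Ψ : Finset (RForm V), ↑Ψ ⊆ Φ ∧ Ψ.card ≤ s.card * m ∧ ∀ i ∈ s, EntailsA ↑Ψ (a i) := by
  classical
  choose! Ψ hΨΦ hΨcard hΨent using h
  refine ⟨s.biUnion Ψ, ?_, Finset.card_biUnion_le_card_mul s Ψ m hΨcard, ?_⟩
  · rw [Finset.coe_biUnion]
    exact Set.iUnion₂_subset hΨΦ
  · exact fun i hi => (hΨent i hi).mono (Finset.coe_subset.2 (Finset.subset_biUnion_of_mem Ψ hi))

open Classical in
noncomputable def maxModel (Φ : Set (RForm V)) (v : V) : Bool :=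
  decide ¬∃ φ ∈ Φ, Sum.inr v ∈ φ.1

lemma maxModel_eq_false_iff {Φ : Set (RForm V)} {v : V} :
    maxModel Φ v = false ↔ ∃ φ ∈ Φ, Sum.inr v ∈ φ.1 := by
  simp [maxModel]

lemma satForm_maxModel {Φ : Set (RForm V)} (hΦ : ConsistentF Φ) :
    ∀ φ ∈ Φ, satForm (maxModel Φ) φ := by
  obtain ⟨σ, hσ⟩ := hΦ
  have le_maxModel : ∀ v, σ v = true → maxModel Φ v = true := by
    intro v hv
    by_contra hfalse
    obtain ⟨φ, hφ, hneg⟩ := maxModel_eq_false_iff.1 (Bool.eq_false_iff.2 hfalse)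
    exact absurd ((hσ φ hφ).1 _ hneg) (by simp [satLit, hv])
  intro φ hφ
  refine ⟨fun l hl => ?_, fun C hC => ?_⟩
  · cases l with
    | inl x => exact le_maxModel x ((hσ φ hφ).1 _ hl)
    | inr x => exact maxModel_eq_false_iff.2 ⟨φ, hφ, hl⟩
  · obtain ⟨x, hx, hxt⟩ := (hσ φ hφ).2 C hC
    exact ⟨x, hx, le_maxModel x hxt⟩

lemma entailsA_lit_iff_clause_singleton {Φ : Set (RForm V)} {x : V} :
    EntailsA Φ (Sum.inl (Sum.inl x)) ↔ EntailsA Φ (Sum.inr {x}) := by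
  simp [EntailsA, satAtom, satLit, satClause]

lemma exists_finset_entailsA_clause_of_mem_clauses [DecidableEq V] {Φ : Set (RForm V)}
    {φ : RForm V} (hφ : φ ∈ Φ) {C D : Finset V} (hC : C ∈ φ.2) (hCD : ∃ v ∈ C, v ∈ D)
    (hneg : ∀ v ∈ C \ D, ∃ ψ ∈ Φ, Sum.inr v ∈ ψ.1) :
    ∃ Ψ : Finset (RForm V), ↑Ψ ⊆ Φ ∧ Ψ.card ≤ C.card ∧ EntailsA ↑Ψ (Sum.inr D) := by
  obtain ⟨Ψ, hΨΦ, hΨcard, hΨent⟩ :=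
    exists_finset_entailsA_all (Φ := Φ) (C \ D) (fun v => Sum.inl (Sum.inr v)) (m := 1)
      fun v hv => by
        obtain ⟨ψ, hψ, hvψ⟩ := hneg v hv
        exact ⟨{ψ}, by simpa using hψ, by simp, by simpa using entailsA_singleton_of_mem hvψ⟩
  obtain ⟨v₀, hv₀C, hv₀D⟩ := hCD
  have hsdiff : C \ D ⊆ C.erase v₀ := fun v hv =>
    Finset.mem_erase.2 ⟨fun h => (Finset.mem_sdiff.1 hv).2 (h ▸ hv₀D), (Finset.mem_sdiff.1 hv).1⟩
  refine ⟨insert φ Ψ, ?_, ?_, ?_⟩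
  · rw [Finset.coe_insert]
    exact Set.insert_subset hφ hΨΦ
  · calc (insert φ Ψ).card ≤ Ψ.card + 1 := Finset.card_insert_le _ _
      _ ≤ (C.erase v₀).card + 1 := by
          have := Finset.card_le_card hsdiff
          rw [mul_one] at hΨcard
          omega
      _ = C.card := Finset.card_erase_add_one hv₀C
  · intro σ hσ
    obtain ⟨v, hvC, hv⟩ := (hσ φ (by simp)).2 C hC
    by_cases hvD : v ∈ D
    · exact ⟨v, hvD, hv⟩
    · have hvfalse : σ v = false :=
        hΨent v (Finset.mem_sdiff.2 ⟨hvC, hvD⟩) σ fun ψ hψ => hσ ψ (by simp [hψ])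
      simp [hv] at hvfalse

lemma exists_finset_entailsA_clause {Φ : Set (RForm V)} {r : ℕ} (hΦ : ConsistentF Φ)
    (hwidth : ∀ φ ∈ Φ, ∀ C ∈ φ.2, C.card ≤ r) (hr : 1 ≤ r) {D : Finset V}
    (h : EntailsA Φ (Sum.inr D)) :
    ∃ Ψ : Finset (RForm V), ↑Ψ ⊆ Φ ∧ Ψ.card ≤ r ∧ EntailsA ↑Ψ (Sum.inr D) := by
  classical
  have hτ := satForm_maxModel hΦ
  set τ := maxModel Φ
  set τ' : V → Bool := fun v => if v ∈ D then false else τ v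
  have hτ'D : ∀ v ∈ D, τ' v = false := fun v hv => if_pos hv
  have hτ'n : ∀ v ∉ D, τ' v = τ v := fun v hv => if_neg hv
  obtain ⟨φ, hφ, hφτ'⟩ : ∃ φ ∈ Φ, ¬satForm τ' φ := by
    by_contra! hall
    obtain ⟨v, hv, hvt⟩ := h τ' hall
    simp [hτ'D v hv] at hvt
  simp only [satForm, not_and_or, not_forall, exists_prop] at hφτ'
  rcases hφτ' with ⟨l | x, hl, hlτ'⟩ | ⟨C, hC, hCτ'⟩
  · have hlD : l ∈ D := by
      by_contra hlD
      exact hlτ' (by simpa [satLit, hτ'n l hlD] using (hτ φ hφ).1 _ hl)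
    exact ⟨{φ}, by simpa using hφ, by simpa using hr,
      fun σ hσ => ⟨l, hlD, (hσ φ (by simp)).1 _ hl⟩⟩
  · refine absurd ?_ hlτ'
    by_cases hxD : x ∈ D
    · exact hτ'D x hxD
    · exact (hτ'n x hxD).trans ((hτ φ hφ).1 _ hl)
  · have hCfalse : ∀ v ∈ C, τ' v = false := by simpa [satClause] using hCτ'
    obtain ⟨v₀, hv₀C, hv₀⟩ := (hτ φ hφ).2 C hC
    have hCD : ∃ v ∈ C, v ∈ D := ⟨v₀, hv₀C, by
      by_contra hv₀D
      simpa [hτ'n v₀ hv₀D, hv₀] using hCfalse v₀ hv₀C⟩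
    obtain ⟨Ψ, hΨΦ, hΨcard, hΨent⟩ := exists_finset_entailsA_clause_of_mem_clauses hφ hC hCD
      fun v hv => maxModel_eq_false_iff.1 <| by
        rw [Finset.mem_sdiff] at hv
        change τ v = false
        rw [← hτ'n v hv.2]
        exact hCfalse v hv.1
    exact ⟨Ψ, hΨΦ, hΨcard.trans (hwidth φ hφ C hC), hΨent⟩

lemma exists_finset_entailsA {Φ : Set (RForm V)} {r : ℕ} (hΦ : ConsistentF Φ)
    (hwidth : ∀ φ ∈ Φ, ∀ C ∈ φ.2, C.card ≤ r) (hr : 1 ≤ r) {a : Atom V}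
    (h : EntailsA Φ a) :
    ∃ Ψ : Finset (RForm V), ↑Ψ ⊆ Φ ∧ Ψ.card ≤ r ∧ EntailsA ↑Ψ a := by
  rcases a with (x | x) | D
  · simp only [entailsA_lit_iff_clause_singleton] at h ⊢
    exact exists_finset_entailsA_clause hΦ hwidth hr h
  · obtain ⟨φ, hφ, hx⟩ := maxModel_eq_false_iff.1 (h _ (satForm_maxModel hΦ))
    exact ⟨{φ}, by simpa using hφ, by simpa using hr, by simpa using entailsA_singleton_of_mem hx⟩
  · exact exists_finset_entailsA_clause hΦ hwidth hr h

theorem stmt_9_general {V : Type} (r : ℕ) (hr : 1 ≤ r) (Δ : Set (RForm V))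
    (hΔ : ∀ φ ∈ Δ, IsRForm r φ) (k : ℕ) (a : Fin k → Atom V) :
    (∃ Φ : Set (RForm V), Φ ⊆ Δ ∧ ConsistentF Φ ∧ ∀ i, EntailsA Φ (a i)) ↔
    (∃ Φ : Finset (RForm V), (↑Φ : Set (RForm V)) ⊆ Δ ∧ Φ.card ≤ r * k ∧
      ConsistentF (↑Φ : Set (RForm V)) ∧
      ∀ i, EntailsA (↑Φ : Set (RForm V)) (a i)) := by
  constructor
  · rintro ⟨Φ, hΦΔ, hΦ, hent⟩
    have hwidth : ∀ φ ∈ Φ, ∀ C ∈ φ.2, C.card ≤ r := fun φ hφ C hC => (hΔ φ (hΦΔ hφ) C hC).2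
    obtain ⟨Ψ, hΨΦ, hcard, hΨent⟩ := exists_finset_entailsA_all Finset.univ a
      fun i _ => exists_finset_entailsA hΦ hwidth hr (hent i)
    rw [Finset.card_univ, Fintype.card_fin, mul_comm] at hcard
    exact ⟨Ψ, hΨΦ.trans hΦΔ, hcard, hΦ.mono hΨΦ, fun i => hΨent i (Finset.mem_univ i)⟩
  · rintro ⟨Φ, hΦΔ, -, hΦ, hent⟩
    exact ⟨Φ, hΦΔ, hΦ, hent⟩

/-- There is a consistent subset of `Δ` entailing each atom `a i` iff there is
one of cardinality at most `r * k`. -/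
theorem stmt_9 {V : Type} (r : ℕ) (hr : 1 ≤ r) (Δ : Set (RForm V))
    (hΔ : ∀ φ ∈ Δ, IsRForm r φ) (k : ℕ) (a : Fin k → Atom V)
    (ha : ∀ i, IsRAtom r (a i)) :
    (∃ Φ : Set (RForm V), Φ ⊆ Δ ∧ ConsistentF Φ ∧ ∀ i, EntailsA Φ (a i)) ↔
    (∃ Φ : Finset (RForm V), (↑Φ : Set (RForm V)) ⊆ Δ ∧ Φ.card ≤ r * k ∧
      ConsistentF (↑Φ : Set (RForm V)) ∧
      ∀ i, EntailsA (↑Φ : Set (RForm V)) (a i)) :=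
  stmt_9_general r hr Δ hΔ k a
end
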